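/- arXiv:1303.1060 — 2 statements merged into one kernel-verified Lean document; each statement's English description precedes it below -/
import Mathlib

section
/- For all real numbers a, b with 0 ≤ a ≤ b one has λ_e(a) + λ_e(b) − λ_e(a+b) ≥ 1/(2·ε·H_ε(a)). -/
open Real

/-- `u(r) = (1-ε)+(T-ε)r²`. -/
noncomputable def uu (ε T r : ℝ) : ℝ := (1 - ε) + (T - ε) * r ^ 2

/-- The ion dispersion relation `λ_i`. -/
noncomputable def lamI (ε T r : ℝ) : ℝ :=
  (Real.sqrt ε)⁻¹ *
    Real.sqrt (((1 + ε) + (T + ε) * r ^ 2 - Real.sqrt ((uu ε T r) ^ 2 + 4 * ε)) / 2)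

/-- The electron dispersion relation `λ_e`. -/
noncomputable def lamE (ε T r : ℝ) : ℝ :=
  (Real.sqrt ε)⁻¹ *
    Real.sqrt (((1 + ε) + (T + ε) * r ^ 2 + Real.sqrt ((uu ε T r) ^ 2 + 4 * ε)) / 2)

/-- `H₁(r) = √(1+r²)`. -/
noncomputable def H1 (r : ℝ) : ℝ := Real.sqrt (1 + r ^ 2)

/-- `H_ε(r) = ε^{-1/2}√(1+Tr²)`. -/
noncomputable def Heps (ε T r : ℝ) : ℝ := (Real.sqrt ε)⁻¹ * Real.sqrt (1 + T * r ^ 2)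

/-!
Write `λ_e = ε^{-1/2} √X`. As `u ↦ √(u² + 4ε)` is 1-Lipschitz and `u` is increasing in `r²` with
slope `T - ε`, `X` grows with slope at most `T` in `r²`; together with `√X(r) ≥ √T r` this makes
`λ_e(r) - √(T/ε) r` nonincreasing. Hence
`λ_e(a) + λ_e(b) - λ_e(a+b) ≥ λ_e(a) - √(T/ε) a ≥ H_ε(a) - √(T/ε) a = ε^{-1/2} / (√(1+Ta²) + √T a)`,
which is at least `ε^{-1/2} / (2√(1+Ta²)) = 1/(2εH_ε(a))`.
-/

lemma sqrt_sq_add_le_sqrt_sq_add_add_sub {x y c : ℝ} (hc : 0 ≤ c) (hxy : x ≤ y) :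
    √(y ^ 2 + c) ≤ √(x ^ 2 + c) + (y - x) := by
  have habs : |x| ≤ √(x ^ 2 + c) := by
    rw [← sqrt_sq_eq_abs]; exact sqrt_le_sqrt (by linarith)
  have hx := (le_abs_self x).trans habs
  have hsq := sq_sqrt (show 0 ≤ x ^ 2 + c by positivity)
  rw [sqrt_le_left (by cases abs_cases x <;> linarith)]
  nlinarith [mul_nonneg (sub_nonneg.2 hxy) (sub_nonneg.2 hx)]

lemma one_div_two_mul_sqrt_one_add_sq_le_sub {y : ℝ} (hy : 0 ≤ y) :
    1 / (2 * √(1 + y ^ 2)) ≤ √(1 + y ^ 2) - y := by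
  have hsq := sq_sqrt (show 0 ≤ 1 + y ^ 2 by positivity)
  have hpos : 0 < √(1 + y ^ 2) := sqrt_pos.2 (by positivity)
  have hy_le : y ≤ √(1 + y ^ 2) := le_sqrt_of_sq_le (by linarith)
  rw [div_le_iff₀ (by positivity)]
  nlinarith

lemma sqrt_mul_le_sqrt_one_add_mul_sq {T r : ℝ} (hr : 0 ≤ r) : √T * r ≤ √(1 + T * r ^ 2) := by
  calc √T * r = √(T * r ^ 2) := by rw [sqrt_mul' T (sq_nonneg r), sqrt_sq hr]
    _ ≤ √(1 + T * r ^ 2) := sqrt_le_sqrt (by linarith)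

/-- `X(r) = ε λ_e(r)²`. -/
noncomputable def lamERadicand (ε T r : ℝ) : ℝ :=
  ((1 + ε) + (T + ε) * r ^ 2 + √(uu ε T r ^ 2 + 4 * ε)) / 2

lemma lamE_eq (ε T r : ℝ) : lamE ε T r = (√ε)⁻¹ * √(lamERadicand ε T r) := rfl

section DispersionRelation

variable {ε T : ℝ}

lemma one_add_mul_sq_le_lamERadicand (hε : 0 ≤ ε) (r : ℝ) :
    1 + T * r ^ 2 ≤ lamERadicand ε T r := by
  have hu : uu ε T r ≤ √(uu ε T r ^ 2 + 4 * ε) :=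
    (le_abs_self _).trans (by rw [← sqrt_sq_eq_abs]; exact sqrt_le_sqrt (by linarith))
  unfold lamERadicand
  unfold uu at hu ⊢
  linarith

lemma lamERadicand_le_add (hε : 0 ≤ ε) (hεT : ε ≤ T) {r r' : ℝ} (hrr' : r ^ 2 ≤ r' ^ 2) :
    lamERadicand ε T r' ≤ lamERadicand ε T r + T * (r' ^ 2 - r ^ 2) := by
  have hu : uu ε T r ≤ uu ε T r' := by unfold uu; nlinarith
  have hv := sqrt_sq_add_le_sqrt_sq_add_add_sub (by positivity : (0 : ℝ) ≤ 4 * ε) hu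
  unfold lamERadicand
  unfold uu at hv ⊢
  nlinarith

lemma one_div_two_mul_mul_Heps_eq (hε : 0 < ε) (r : ℝ) :
    1 / (2 * ε * Heps ε T r) = (√ε)⁻¹ * (1 / (2 * √(1 + T * r ^ 2))) := by
  have hs := sqrt_pos.2 hε
  rw [Heps]
  field_simp
  rw [sq_sqrt hε.le]

lemma Heps_le_lamE (hε : 0 ≤ ε) (r : ℝ) : Heps ε T r ≤ lamE ε T r :=
  mul_le_mul_of_nonneg_left (sqrt_le_sqrt (one_add_mul_sq_le_lamERadicand hε r)) (by positivity)

lemma lamE_le_lamE_add (hε : 0 ≤ ε) (hεT : ε ≤ T) {r r' : ℝ} (hr : 0 ≤ r) (hrr' : r ≤ r') :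
    lamE ε T r' ≤ lamE ε T r + (√ε)⁻¹ * (√T * (r' - r)) := by
  rw [lamE_eq, lamE_eq, ← mul_add]
  refine mul_le_mul_of_nonneg_left ?_ (by positivity)
  set S := √(lamERadicand ε T r)
  have hT := sq_sqrt (hε.trans hεT)
  have hS : √T * r ≤ S := (sqrt_mul_le_sqrt_one_add_mul_sq hr).trans
    (sqrt_le_sqrt (one_add_mul_sq_le_lamERadicand hε r))
  have hSsq : S ^ 2 = lamERadicand ε T r :=
    sq_sqrt ((by positivity : (0 : ℝ) ≤ 1 + (√T * r) ^ 2).trans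
      (by rw [mul_pow, hT]; exact one_add_mul_sq_le_lamERadicand hε r))
  have hX := lamERadicand_le_add hε hεT (pow_le_pow_left₀ hr hrr' 2)
  rw [sqrt_le_left (by have := sqrt_nonneg T; nlinarith)]
  nlinarith [mul_le_mul_of_nonneg_left hS (mul_nonneg (sqrt_nonneg T) (sub_nonneg.2 hrr'))]

end DispersionRelation

theorem stmt10_general (ε T : ℝ) (hε : 0 < ε) (hε' : ε ≤ 1 / 1000) (hT : 1 ≤ T)
    (a b : ℝ) (ha : 0 ≤ a) (hab : a ≤ b) :
    1 / (2 * ε * Heps ε T a) ≤ lamE ε T a + lamE ε T b - lamE ε T (a + b) := by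
  have hεT : ε ≤ T := by linarith
  have hTa : 1 + T * a ^ 2 = 1 + (√T * a) ^ 2 := by rw [mul_pow, sq_sqrt (by linarith)]
  have hgrowth := lamE_le_lamE_add hε.le hεT (ha.trans hab) (le_add_of_nonneg_left ha)
  calc 1 / (2 * ε * Heps ε T a)
      = (√ε)⁻¹ * (1 / (2 * √(1 + (√T * a) ^ 2))) := by
        rw [one_div_two_mul_mul_Heps_eq hε, hTa]
    _ ≤ (√ε)⁻¹ * (√(1 + (√T * a) ^ 2) - √T * a) :=
        mul_le_mul_of_nonneg_left
          (one_div_two_mul_sqrt_one_add_sq_le_sub (by positivity)) (by positivity)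
    _ = Heps ε T a - (√ε)⁻¹ * (√T * (a + b - b)) := by rw [Heps, hTa]; ring
    _ ≤ lamE ε T a + lamE ε T b - lamE ε T (a + b) := by
        linarith [Heps_le_lamE (T := T) hε.le a]

/-- For `0 ≤ a ≤ b`: `λ_e(a)+λ_e(b)−λ_e(a+b) ≥ 1/(2εH_ε(a))`. -/
theorem stmt10 (ε T : ℝ) (hε : 0 < ε) (hε' : ε ≤ 1 / 1000) (hT : 1 ≤ T) (hT' : T ≤ 100)
    (a b : ℝ) (ha : 0 ≤ a) (hab : a ≤ b) :
    1 / (2 * ε * Heps ε T a) ≤ lamE ε T a + lamE ε T b - lamE ε T (a + b) :=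
  stmt10_general ε T hε hε' hT a b ha hab
end

section
/- The function λ_i is twice differentiable on (0,∞), and its second derivative satisfies |λ_i''(r)| ≤ 8·√2·T for every r > 0. -/
open Real

/-!
Since `v - u = 4ε/w` with `w = u + v ≥ 2`, the radicand of `λ_i` equals `ε g` with
`g = 1 + r² - 2/w ≥ r²`, so `λ_i = √g` is smooth for `r > 0`. One computes `g' = 2rD`
with `D = 1 + 2(T-ε)/(vw)` and `D' = -4(T-ε)²r/v³` (`g` and `D` are `lamISq` and
`lamISqSlope`), hence `λ_i'' = D (g - r²D) / g^{3/2} - 4(T-ε)²r² / (v³ √g)`, a difference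
of two nonnegative terms. With `a = (T-ε)r²`, the first is at most
`(g - r²D)/r³ ≤ a²(2+a)/(2u²r³)`, the second at most `4(T-ε)²r²/(v² √a)` because
`g ≥ a/v²`; both are then `≤ 8√2 (T-ε)` by polynomial inequalities in `a`, using
`u ≥ a + 1 - ε` and `T ≤ 100`.
-/

open Topology

noncomputable def vv (ε T r : ℝ) : ℝ := √(uu ε T r ^ 2 + 4 * ε)

noncomputable def ww (ε T r : ℝ) : ℝ := uu ε T r + vv ε T r

noncomputable def lamISq (ε T r : ℝ) : ℝ := 1 + r ^ 2 - 2 / ww ε T r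

noncomputable def lamISqSlope (ε T r : ℝ) : ℝ := 1 + 2 * (T - ε) / (vv ε T r * ww ε T r)

noncomputable def lamIDeriv (ε T r : ℝ) : ℝ := r * lamISqSlope ε T r / √(lamISq ε T r)

noncomputable def lamIDeriv2Pos (ε T r : ℝ) : ℝ :=
  lamISqSlope ε T r * (lamISq ε T r - r ^ 2 * lamISqSlope ε T r) /
    (lamISq ε T r * √(lamISq ε T r))

noncomputable def lamIDeriv2Neg (ε T r : ℝ) : ℝ :=
  4 * (T - ε) ^ 2 * r ^ 2 / (vv ε T r ^ 3 * √(lamISq ε T r))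

noncomputable def lamIDeriv2 (ε T r : ℝ) : ℝ := lamIDeriv2Pos ε T r - lamIDeriv2Neg ε T r

lemma le_eight_sqrt_two_mul_of_sq_le {x t : ℝ} (ht : 0 ≤ t) (h : x ^ 2 ≤ 128 * t ^ 2) :
    x ≤ 8 * √2 * t := by
  refine le_of_sq_le_sq ?_ (by positivity)
  rw [mul_pow, mul_pow, sq_sqrt zero_le_two]; linarith

lemma mul_mul_two_add_sq_le {t a U : ℝ} (ht : t ≤ 100) (ha : 0 ≤ a)
    (hU : a + 999 / 1000 ≤ U) : t * a * (2 + a) ^ 2 ≤ 512 * U ^ 4 := by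
  have h100 : t * a * (2 + a) ^ 2 ≤ 100 * a * (2 + a) ^ 2 := by gcongr
  have h512 : 100 * a * (2 + a) ^ 2 ≤ 512 * (a + 999 / 1000) ^ 4 := by
    nlinarith [sq_nonneg (a - 1), sq_nonneg a, mul_nonneg ha (sq_nonneg a),
      mul_nonneg ha (sq_nonneg (a - 1)), pow_nonneg ha 3, pow_nonneg ha 4]
  have : (a + 999 / 1000) ^ 4 ≤ U ^ 4 := by gcongr
  linarith

lemma le_eight_mul_pow_four {a V : ℝ} (ha : 0 ≤ a) (hV : a + 1 / 2 ≤ V) :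
    a ≤ 8 * V ^ 4 := by
  have : (a + 1 / 2) ^ 4 ≤ V ^ 4 := by gcongr
  nlinarith [sq_nonneg a, mul_nonneg ha (sq_nonneg a), pow_nonneg ha 3, pow_nonneg ha 4]

section

variable {ε T r : ℝ}

lemma vv_sq (hε : 0 ≤ ε) : vv ε T r ^ 2 = uu ε T r ^ 2 + 4 * ε :=
  sq_sqrt (by positivity)

lemma vv_pos (hε : 0 < ε) : 0 < vv ε T r :=
  sqrt_pos.2 (by positivity)

lemma uu_le_vv (hε : 0 ≤ ε) : uu ε T r ≤ vv ε T r :=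
  (le_abs_self _).trans (abs_le_sqrt (by linarith))

lemma ww_pos (hε : 0 < ε) : 0 < ww ε T r := by
  have : |uu ε T r| < vv ε T r := (lt_sqrt (abs_nonneg _)).2 (by rw [sq_abs]; linarith)
  rw [ww]
  linarith [neg_abs_le (uu ε T r)]

lemma vv_sub_uu (hε : 0 < ε) : vv ε T r - uu ε T r = 4 * ε / ww ε T r := by
  rw [eq_div_iff (ww_pos hε).ne', ww]
  linear_combination (vv_sq hε.le : vv ε T r ^ 2 = _)

lemma lamI_eq_sqrt_lamISq (hε : 0 < ε) : lamI ε T r = √(lamISq ε T r) := by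
  have key : ((1 + ε) + (T + ε) * r ^ 2 - vv ε T r) / 2 = ε * lamISq ε T r := by
    have h : vv ε T r - uu ε T r = 4 * ε / ww ε T r := vv_sub_uu hε
    rw [uu] at h
    rw [lamISq]
    linear_combination (-1 / 2 : ℝ) * h
  rw [lamI, ← vv, key, sqrt_mul hε.le, ← mul_assoc, inv_mul_cancel₀ (by positivity), one_mul]

lemma one_sub_le_uu (hεT : ε ≤ T) : 1 - ε ≤ uu ε T r := by
  have : 0 ≤ (T - ε) * r ^ 2 := by positivity
  rw [uu]; linarith

lemma vv_le_uu_add (hε : 0 ≤ ε) (hεT : ε ≤ T) : vv ε T r ≤ uu ε T r + 2 * ε := by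
  have hu : 1 - ε ≤ uu ε T r := one_sub_le_uu hεT
  exact sqrt_le_iff.2 ⟨by linarith, by nlinarith⟩

lemma one_add_le_vv (hε1 : ε ≤ 1) (hεT : ε ≤ T) : 1 + ε ≤ vv ε T r := by
  have hu : 1 - ε ≤ uu ε T r := one_sub_le_uu hεT
  exact le_sqrt_of_sq_le (by nlinarith)

lemma two_le_ww (hε1 : ε ≤ 1) (hεT : ε ≤ T) : 2 ≤ ww ε T r := by
  have hu : 1 - ε ≤ uu ε T r := one_sub_le_uu hεT
  have hv : 1 + ε ≤ vv ε T r := one_add_le_vv hε1 hεT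
  rw [ww]; linarith

lemma sq_le_lamISq (hε1 : ε ≤ 1) (hεT : ε ≤ T) : r ^ 2 ≤ lamISq ε T r := by
  have hw : 2 ≤ ww ε T r := two_le_ww hε1 hεT
  have : 2 / ww ε T r ≤ 1 := (div_le_one (by linarith)).2 hw
  rw [lamISq]; linarith

lemma hasDerivAt_uu : HasDerivAt (uu ε T) (2 * (T - ε) * r) r :=
  (((hasDerivAt_pow 2 r).const_mul (T - ε)).const_add (1 - ε)).congr_deriv (by ring)

lemma hasDerivAt_vv (hε : 0 < ε) :
    HasDerivAt (vv ε T) (2 * (T - ε) * r * uu ε T r / vv ε T r) r := by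
  refine ((hasDerivAt_uu.fun_pow 2).add_const (4 * ε) |>.sqrt
    (by positivity)).congr_deriv ?_
  have hv : √(uu ε T r ^ 2 + 4 * ε) ≠ 0 := (vv_pos hε).ne'
  rw [vv]
  field_simp
  ring

lemma hasDerivAt_ww (hε : 0 < ε) :
    HasDerivAt (ww ε T) (2 * (T - ε) * r * ww ε T r / vv ε T r) r := by
  have hv : vv ε T r ≠ 0 := (vv_pos hε).ne'
  refine (hasDerivAt_uu.add (hasDerivAt_vv hε)).congr_deriv ?_
  rw [ww]
  field_simp
  ring

lemma hasDerivAt_lamISq (hε : 0 < ε) :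
    HasDerivAt (lamISq ε T) (2 * r * lamISqSlope ε T r) r := by
  have hv : vv ε T r ≠ 0 := (vv_pos hε).ne'
  have hw : ww ε T r ≠ 0 := (ww_pos hε).ne'
  refine (((hasDerivAt_pow 2 r).const_add 1).sub
    ((hasDerivAt_const r 2).div (hasDerivAt_ww hε) hw)).congr_deriv ?_
  rw [lamISqSlope]
  field_simp
  ring

lemma hasDerivAt_lamISqSlope (hε : 0 < ε) :
    HasDerivAt (lamISqSlope ε T) (-(4 * (T - ε) ^ 2 * r / vv ε T r ^ 3)) r := by
  have hv : vv ε T r ≠ 0 := (vv_pos hε).ne'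
  have hw : ww ε T r ≠ 0 := (ww_pos hε).ne'
  refine (((hasDerivAt_const r (2 * (T - ε))).div ((hasDerivAt_vv hε).fun_mul (hasDerivAt_ww hε))
    (mul_ne_zero hv hw)).const_add 1).congr_deriv ?_
  rw [ww] at *
  field_simp
  ring

lemma hasDerivAt_lamI (hε : 0 < ε) (hε1 : ε ≤ 1) (hεT : ε ≤ T) (hr : r ≠ 0) :
    HasDerivAt (lamI ε T) (lamIDeriv ε T r) r := by
  have hg : 0 < lamISq ε T r := (by positivity : 0 < r ^ 2).trans_le (sq_le_lamISq hε1 hεT)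
  have hs : √(lamISq ε T r) ≠ 0 := (sqrt_pos.2 hg).ne'
  rw [show lamI ε T = fun x ↦ √(lamISq ε T x) from funext fun x ↦ lamI_eq_sqrt_lamISq hε]
  refine ((hasDerivAt_lamISq hε).sqrt hg.ne').congr_deriv ?_
  rw [lamIDeriv]
  field_simp

lemma hasDerivAt_lamIDeriv (hε : 0 < ε) (hε1 : ε ≤ 1) (hεT : ε ≤ T) (hr : r ≠ 0) :
    HasDerivAt (lamIDeriv ε T) (lamIDeriv2 ε T r) r := by
  have hg : 0 < lamISq ε T r := (by positivity : 0 < r ^ 2).trans_le (sq_le_lamISq hε1 hεT)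
  have hs : 0 < √(lamISq ε T r) := sqrt_pos.2 hg
  have hs2 : √(lamISq ε T r) ^ 2 = lamISq ε T r := sq_sqrt hg.le
  refine (((hasDerivAt_id' r).fun_mul (hasDerivAt_lamISqSlope hε)).fun_div
    ((hasDerivAt_lamISq hε).sqrt hg.ne') hs.ne').congr_deriv ?_
  have hv : vv ε T r ≠ 0 := (vv_pos hε).ne'
  rw [lamIDeriv2, lamIDeriv2Pos, lamIDeriv2Neg]
  -- writing `g = S²` with `S = √g` lets `field_simp` clear `g √g = S³`
  set S := √(lamISq ε T r)
  rw [← hs2]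
  field_simp
  ring

lemma lamISq_sub_sq_mul_lamISqSlope (hε : 0 < ε) :
    lamISq ε T r - r ^ 2 * lamISqSlope ε T r =
      (vv ε T r * ww ε T r - 2 * vv ε T r - 2 * ((T - ε) * r ^ 2)) /
        (vv ε T r * ww ε T r) := by
  have hv : vv ε T r ≠ 0 := (vv_pos hε).ne'
  have hw : ww ε T r ≠ 0 := (ww_pos hε).ne'
  rw [lamISq, lamISqSlope]
  field_simp
  ring

-- Clearing the factor `v + 1 + ε` leaves a right-hand side that is linear in `v`, so the bounds
-- `1 + ε ≤ v ≤ u + 2ε` apply directly.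
lemma vv_mul_ww_sub_mul_vv_add (hε : 0 ≤ ε) :
    (vv ε T r * ww ε T r - 2 * vv ε T r - 2 * ((T - ε) * r ^ 2)) * (vv ε T r + 1 + ε) =
      (T - ε) * r ^ 2 * (uu ε T r * vv ε T r + ((T - ε) * r ^ 2) ^ 2 +
        2 * ((T - ε) * r ^ 2) * (1 - ε) - (1 - ε ^ 2)) := by
  have h : vv ε T r ^ 2 = uu ε T r ^ 2 + 4 * ε := vv_sq hε
  rw [uu] at h
  rw [ww, uu]
  linear_combination (vv ε T r + (T - ε) * r ^ 2) * h

lemma vv_mul_ww_sub_nonneg (hε : 0 ≤ ε) (hε1 : ε ≤ 1) (hεT : ε ≤ T) :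
    0 ≤ vv ε T r * ww ε T r - 2 * vv ε T r - 2 * ((T - ε) * r ^ 2) := by
  have hu : 1 - ε ≤ uu ε T r := one_sub_le_uu hεT
  have hv : 1 + ε ≤ vv ε T r := one_add_le_vv hε1 hεT
  have ha : 0 ≤ (T - ε) * r ^ 2 := by nlinarith
  have key := vv_mul_ww_sub_mul_vv_add (T := T) (r := r) hε
  have : 0 ≤ (T - ε) * r ^ 2 * (uu ε T r * vv ε T r + ((T - ε) * r ^ 2) ^ 2 +
      2 * ((T - ε) * r ^ 2) * (1 - ε) - (1 - ε ^ 2)) := by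
    refine mul_nonneg ha ?_
    nlinarith [mul_le_mul_of_nonneg_left hv (by linarith : 0 ≤ uu ε T r)]
  nlinarith

lemma vv_mul_ww_sub_le (hε : 0 ≤ ε) (hε1 : ε ≤ 1) (hεT : ε ≤ T) :
    vv ε T r * ww ε T r - 2 * vv ε T r - 2 * ((T - ε) * r ^ 2) ≤
      ((T - ε) * r ^ 2) ^ 2 * (2 + (T - ε) * r ^ 2) := by
  have hu : 1 - ε ≤ uu ε T r := one_sub_le_uu hεT
  have hv : 1 + ε ≤ vv ε T r := one_add_le_vv hε1 hεT
  have hvu : vv ε T r ≤ uu ε T r + 2 * ε := vv_le_uu_add hε hεT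
  have ha : 0 ≤ (T - ε) * r ^ 2 := by nlinarith
  have key := vv_mul_ww_sub_mul_vv_add (T := T) (r := r) hε
  have : (T - ε) * r ^ 2 * (uu ε T r * vv ε T r + ((T - ε) * r ^ 2) ^ 2 +
      2 * ((T - ε) * r ^ 2) * (1 - ε) - (1 - ε ^ 2)) ≤
      (T - ε) * r ^ 2 * ((T - ε) * r ^ 2 * (4 + 2 * ((T - ε) * r ^ 2))) := by
    refine mul_le_mul_of_nonneg_left ?_ ha
    rw [uu] at hvu ⊢
    nlinarith [mul_le_mul_of_nonneg_left hvu (by linarith : 0 ≤ uu ε T r)]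
  nlinarith [mul_nonneg (by positivity : 0 ≤ ((T - ε) * r ^ 2) ^ 2 * (2 + (T - ε) * r ^ 2))
    (by linarith : 0 ≤ vv ε T r + ε - 1)]

lemma sq_mul_lamISqSlope_le_lamISq (hε : 0 < ε) (hε1 : ε ≤ 1) (hεT : ε ≤ T) :
    r ^ 2 * lamISqSlope ε T r ≤ lamISq ε T r := by
  have hvw : 0 < vv ε T r * ww ε T r := mul_pos (vv_pos hε) (ww_pos hε)
  rw [← sub_nonneg, lamISq_sub_sq_mul_lamISqSlope hε]
  exact div_nonneg (vv_mul_ww_sub_nonneg hε.le hε1 hεT) hvw.le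

lemma lamISq_sub_sq_mul_lamISqSlope_le (hε : 0 < ε) (hε1 : ε < 1) (hεT : ε ≤ T) :
    lamISq ε T r - r ^ 2 * lamISqSlope ε T r ≤
      ((T - ε) * r ^ 2) ^ 2 * (2 + (T - ε) * r ^ 2) / (2 * uu ε T r ^ 2) := by
  have hu : 0 < uu ε T r := by linarith [(one_sub_le_uu hεT : 1 - ε ≤ uu ε T r)]
  have huv : uu ε T r ≤ vv ε T r := uu_le_vv hε.le
  have hvw : 2 * uu ε T r ^ 2 ≤ vv ε T r * ww ε T r := by
    rw [ww]; nlinarith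
  rw [lamISq_sub_sq_mul_lamISqSlope hε]
  gcongr
  exact vv_mul_ww_sub_le hε.le hε1.le hεT

lemma one_le_lamISqSlope (hε : 0 < ε) (hεT : ε ≤ T) : 1 ≤ lamISqSlope ε T r := by
  have hvw : 0 < vv ε T r * ww ε T r := mul_pos (vv_pos hε) (ww_pos hε)
  have : 0 ≤ 2 * (T - ε) / (vv ε T r * ww ε T r) := div_nonneg (by linarith) hvw.le
  rw [lamISqSlope]; linarith

lemma lamIDeriv2Pos_nonneg (hε : 0 < ε) (hε1 : ε ≤ 1) (hεT : ε ≤ T) :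
    0 ≤ lamIDeriv2Pos ε T r := by
  have hD : 1 ≤ lamISqSlope ε T r := one_le_lamISqSlope hε hεT
  have hX : r ^ 2 * lamISqSlope ε T r ≤ lamISq ε T r :=
    sq_mul_lamISqSlope_le_lamISq hε hε1 hεT
  have hG : 0 ≤ lamISq ε T r := (sq_nonneg r).trans (sq_le_lamISq hε1 hεT)
  rw [lamIDeriv2Pos]
  exact div_nonneg (mul_nonneg (by linarith) (by linarith)) (by positivity)

lemma lamIDeriv2Pos_le (hε : 0 < ε) (hε' : ε ≤ 1 / 1000) (hεT : ε ≤ T) (hT : T ≤ 100)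
    (hr : 0 < r) : lamIDeriv2Pos ε T r ≤ 8 * √2 * (T - ε) := by
  set t := T - ε
  set a := t * r ^ 2 with ha_def
  have ht : 0 ≤ t := by linarith
  have ha : 0 ≤ a := by positivity
  have hU : a + 999 / 1000 ≤ uu ε T r := by rw [uu]; linarith
  have hpoly : t * a * (2 + a) ^ 2 ≤ 512 * uu ε T r ^ 4 :=
    mul_mul_two_add_sq_le (by linarith) ha hU
  have hG : r ^ 2 ≤ lamISq ε T r := sq_le_lamISq (by linarith) hεT
  have hG0 : 0 < lamISq ε T r := (by positivity : 0 < r ^ 2).trans_le hG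
  have hS : r ≤ √(lamISq ε T r) := le_sqrt_of_sq_le hG
  have hD : r ^ 2 * lamISqSlope ε T r ≤ lamISq ε T r :=
    sq_mul_lamISqSlope_le_lamISq hε (by linarith) hεT
  have hX0 : 0 ≤ lamISq ε T r - r ^ 2 * lamISqSlope ε T r := by linarith
  have hX : lamISq ε T r - r ^ 2 * lamISqSlope ε T r ≤ a ^ 2 * (2 + a) / (2 * uu ε T r ^ 2) :=
    lamISq_sub_sq_mul_lamISqSlope_le hε (by linarith) hεT
  have hu0 : 0 < uu ε T r := by linarith
  calc lamIDeriv2Pos ε T r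
      ≤ (lamISq ε T r - r ^ 2 * lamISqSlope ε T r) / (r ^ 2 * r) := by
        rw [lamIDeriv2Pos, div_le_div_iff₀ (by positivity) (by positivity)]
        nlinarith [mul_le_mul_of_nonneg_left (mul_le_mul hD hS hr.le hG0.le) hX0]
    _ ≤ a ^ 2 * (2 + a) / (2 * uu ε T r ^ 2) / (r ^ 2 * r) := by gcongr
    _ = t ^ 2 * r * (2 + a) / (2 * uu ε T r ^ 2) := by
        rw [ha_def]; field_simp
    _ ≤ 8 * √2 * t := by
        refine le_eight_sqrt_two_mul_of_sq_le ht ?_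
        rw [div_pow, div_le_iff₀ (by positivity)]
        calc (t ^ 2 * r * (2 + a)) ^ 2 = t ^ 2 * (t * a * (2 + a) ^ 2) := by rw [ha_def]; ring
          _ ≤ t ^ 2 * (512 * uu ε T r ^ 4) := by gcongr
          _ = 128 * t ^ 2 * (2 * uu ε T r ^ 2) ^ 2 := by ring

lemma mul_sq_div_vv_sq_le_lamISq (hε : 0 < ε) (hε1 : ε ≤ 1) (hεT : ε ≤ T) :
    (T - ε) * r ^ 2 / vv ε T r ^ 2 ≤ lamISq ε T r := by
  have hv : 0 < vv ε T r := vv_pos hε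
  have hw : 0 < ww ε T r := ww_pos hε
  have huv : uu ε T r ≤ vv ε T r := uu_le_vv hε.le
  have ha : 0 ≤ (T - ε) * r ^ 2 := by nlinarith
  have hD : r ^ 2 * lamISqSlope ε T r =
      r ^ 2 + 2 * ((T - ε) * r ^ 2) / (vv ε T r * ww ε T r) := by
    rw [lamISqSlope]; field_simp
  have : (T - ε) * r ^ 2 / vv ε T r ^ 2 ≤ 2 * ((T - ε) * r ^ 2) / (vv ε T r * ww ε T r) := by
    rw [div_le_div_iff₀ (by positivity) (by positivity), ww]
    nlinarith [mul_le_mul_of_nonneg_left huv (mul_nonneg ha hv.le)]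
  have hX : r ^ 2 * lamISqSlope ε T r ≤ lamISq ε T r :=
    sq_mul_lamISqSlope_le_lamISq hε hε1 hεT
  linarith [sq_nonneg r]

lemma lamIDeriv2Neg_nonneg (hε : 0 < ε) : 0 ≤ lamIDeriv2Neg ε T r := by
  have hv : 0 < vv ε T r := vv_pos hε
  rw [lamIDeriv2Neg]
  positivity

lemma lamIDeriv2Neg_le (hε : 0 < ε) (hε1 : ε ≤ 1 / 2) (hεT : ε ≤ T) (hr : 0 < r) :
    lamIDeriv2Neg ε T r ≤ 8 * √2 * (T - ε) := by
  set t := T - ε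
  set a := t * r ^ 2 with ha_def
  have ht : 0 ≤ t := by linarith
  have ha : 0 ≤ a := by positivity
  have hv : 0 < vv ε T r := vv_pos hε
  have hG : r ^ 2 ≤ lamISq ε T r := sq_le_lamISq (by linarith) hεT
  have hG0 : 0 < lamISq ε T r := (by positivity : 0 < r ^ 2).trans_le hG
  have haG : a ≤ lamISq ε T r * vv ε T r ^ 2 :=
    (div_le_iff₀ (by positivity)).1 (mul_sq_div_vv_sq_le_lamISq hε (by linarith) hεT)
  have haV : a ≤ 8 * vv ε T r ^ 4 := by
    have huv : uu ε T r ≤ vv ε T r := uu_le_vv hε.le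
    rw [uu] at huv
    exact le_eight_mul_pow_four ha (by linarith)
  refine le_eight_sqrt_two_mul_of_sq_le ht ?_
  rw [lamIDeriv2Neg, div_pow, div_le_iff₀ (by positivity), mul_pow (vv ε T r ^ 3),
    sq_sqrt hG0.le]
  calc _ = 16 * t ^ 2 * (a * a) := by rw [ha_def]; ring
    _ ≤ 16 * t ^ 2 * (8 * vv ε T r ^ 4 * (lamISq ε T r * vv ε T r ^ 2)) := by gcongr
    _ = 128 * t ^ 2 * ((vv ε T r ^ 3) ^ 2 * lamISq ε T r) := by ring

lemma abs_lamIDeriv2_le (hε : 0 < ε) (hε' : ε ≤ 1 / 1000) (hεT : ε ≤ T) (hT : T ≤ 100)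
    (hr : 0 < r) : |lamIDeriv2 ε T r| ≤ 8 * √2 * (T - ε) :=
  abs_sub_le_of_nonneg_of_le (lamIDeriv2Pos_nonneg hε (by linarith) hεT)
    (lamIDeriv2Pos_le hε hε' hεT hT hr) (lamIDeriv2Neg_nonneg hε)
    (lamIDeriv2Neg_le hε (by linarith) hεT hr)

end

/-- `λ_i` is twice differentiable on `(0,∞)` with `|λ_i''(r)| ≤ 8√2 T` for every `r > 0`. -/
theorem stmt11 (ε T : ℝ) (hε : 0 < ε) (hε' : ε ≤ 1 / 1000) (hT : 1 ≤ T) (hT' : T ≤ 100)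
    (r : ℝ) (hr : 0 < r) :
    DifferentiableAt ℝ (lamI ε T) r ∧ DifferentiableAt ℝ (deriv (lamI ε T)) r ∧
      |deriv (deriv (lamI ε T)) r| ≤ 8 * Real.sqrt 2 * T := by
  have hε1 : ε ≤ 1 := by linarith
  have hεT : ε ≤ T := by linarith
  have hderiv : deriv (lamI ε T) =ᶠ[𝓝 r] lamIDeriv ε T :=
    eventually_gt_nhds hr |>.mono fun x hx ↦ (hasDerivAt_lamI hε hε1 hεT hx.ne').deriv
  have hderiv2 := hasDerivAt_lamIDeriv hε hε1 hεT hr.ne'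
  refine ⟨(hasDerivAt_lamI hε hε1 hεT hr.ne').differentiableAt,
    hderiv2.differentiableAt.congr_of_eventuallyEq hderiv, ?_⟩
  rw [hderiv.deriv_eq, hderiv2.deriv]
  calc |lamIDeriv2 ε T r| ≤ 8 * √2 * (T - ε) := abs_lamIDeriv2_le hε hε' hεT hT' hr
    _ ≤ 8 * √2 * T := by gcongr; linarith
end
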